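/- Let (X,d,μ) be a metric measure space, f ∈ N^{1,p}(X) with upper gradient g ∈ L^p(X), and let f̃ ∈ L^p(X) be a continuous function with f̃ = f on a closed set K ⊂ X. If g is an upper gradient for f̃ on X∖K (i.e., the upper gradient inequality holds for all rectifiable curves contained in X∖K), then g is an upper gradient for f̃ on all of X; in particular f̃ ∈ N^{1,p}(X). -/

import Mathlib

open MeasureTheory Metric Set ENNReal NNReal Filter

noncomputable section

variable {X : Type*} [MetricSpace X] [MeasurableSpace X]

/-- The length of a curve `γ : [0,1] → X`. -/
def curveLen (γ : ℝ → X) : ℝ≥0∞ := eVariationOn γ (Set.Icc 0 1)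

/-- A curve is a continuous map on `[0,1]`. -/
def IsCurve (γ : ℝ → X) : Prop := ContinuousOn γ (Set.Icc 0 1)

/-- A rectifiable curve: continuous with finite length. -/
def IsRectCurve (γ : ℝ → X) : Prop := IsCurve γ ∧ curveLen γ < ⊤

/-- Constant speed parametrization on `[0,1]`: the metric speed equals the length a.e. -/
def IsConstSpeed (γ : ℝ → X) : Prop :=
  HasConstantSpeedOnWith γ (Set.Icc 0 1) (curveLen γ).toNNReal

/-- The path (arc-length) integral `∫_γ g ds` of `g : X → [0,∞]` along a curve `γ`,
computed through the arc-length (natural) parametrization. -/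
def pathIntegral (g : X → ℝ≥0∞) (γ : ℝ → X) : ℝ≥0∞ :=
  ∫⁻ s in Set.Icc (0:ℝ) (curveLen γ).toReal,
    g (naturalParameterization γ (Set.Icc 0 1) 0 s)

/-- `g` is an upper gradient of `f` on the set `A`. -/
def IsUpperGradientOn (g : X → ℝ≥0∞) (f : X → ℝ) (A : Set X) : Prop :=
  ∀ γ : ℝ → X, IsRectCurve γ → (∀ t ∈ Set.Icc (0:ℝ) 1, γ t ∈ A) →
    ENNReal.ofReal |f (γ 1) - f (γ 0)| ≤ pathIntegral g γ

/-- `g` is an upper gradient of `f`. -/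
def IsUpperGradient (g : X → ℝ≥0∞) (f : X → ℝ) : Prop :=
  IsUpperGradientOn g f Set.univ

/-- Membership in the Newtonian space `N^{1,p}(X)`. -/
def MemN1p (p : ℝ) (μ : Measure X) (f : X → ℝ) : Prop :=
  MemLp f (ENNReal.ofReal p) μ ∧
    ∃ g : X → ℝ≥0∞, IsUpperGradient g f ∧ ∫⁻ x, g x ^ p ∂μ < ⊤

/-- `‖f‖_{N^{1,p}}^p` as an extended real: `‖f‖_p^p + inf over upper gradients of ‖g‖_p^p`. -/
def N1pEnorm (p : ℝ) (μ : Measure X) (f : X → ℝ) : ℝ≥0∞ :=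
  (∫⁻ x, ENNReal.ofReal |f x| ^ p ∂μ) +
    ⨅ (g : X → ℝ≥0∞) (_ : IsUpperGradient g f), ∫⁻ x, g x ^ p ∂μ

/-- The Sobolev capacity `Cap_p(E)`. -/
def sobCap (p : ℝ) (μ : Measure X) (E : Set X) : ℝ≥0∞ :=
  ⨅ (u : X → ℝ) (_ : MemN1p p μ u ∧ ∀ x ∈ E, 1 ≤ u x), N1pEnorm p μ u

/-- The `p`-modulus of a curve family. -/
def pModulus (p : ℝ) (μ : Measure X) (Γ : Set (ℝ → X)) : ℝ≥0∞ :=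
  ⨅ (ρ : X → ℝ≥0∞) (_ : Measurable ρ ∧ ∀ γ ∈ Γ, 1 ≤ pathIntegral ρ γ),
    ∫⁻ x, ρ x ^ p ∂μ

/-- `g` is a `p`-weak upper gradient of `f`. -/
def IsWeakUpperGradient (p : ℝ) (μ : Measure X) (g : X → ℝ≥0∞) (f : X → ℝ) : Prop :=
  ∃ Γ₀ : Set (ℝ → X), pModulus p μ Γ₀ = 0 ∧
    ∀ γ : ℝ → X, IsRectCurve γ → γ ∉ Γ₀ →
      ENNReal.ofReal |f (γ 1) - f (γ 0)| ≤ pathIntegral g γ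

/-- Every sequence in `S` has a subsequence converging uniformly on `[0,1]`. -/
def UnifConvSubseq (S : Set (ℝ → X)) : Prop :=
  ∀ γs : ℕ → (ℝ → X), (∀ i, γs i ∈ S) →
    ∃ φ : ℕ → ℕ, StrictMono φ ∧ ∃ γ : ℝ → X,
      TendstoUniformlyOn (fun n => γs (φ n)) γ Filter.atTop (Set.Icc 0 1)

/-- A good function in the sense of the paper: for any family of rectifiable curves,
bounded Borel set `A`, and `δ, L > 0`, the subfamily of constant-speed curves contained in `A`,
with `∫_γ g ≤ L` and `diam(γ) ≥ δ`, is precompact for uniform convergence. -/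
def GoodFunction (g : X → ℝ≥0∞) : Prop :=
  ∀ (Γ : Set (ℝ → X)) (A : Set X), (∀ γ ∈ Γ, IsRectCurve γ) →
    Bornology.IsBounded A → MeasurableSet A → ∀ δ L : ℝ, 0 < δ → 0 < L →
    UnifConvSubseq {γ | γ ∈ Γ ∧ IsConstSpeed γ ∧ (∀ t ∈ Set.Icc (0:ℝ) 1, γ t ∈ A) ∧
      pathIntegral g γ ≤ ENNReal.ofReal L ∧ δ ≤ Metric.diam (γ '' Set.Icc 0 1)}

/-- Length of the discrete path `(p 0, …, p n)`. -/
def dLen (p : ℕ → X) (n : ℕ) : ℝ := ∑ k ∈ Finset.range n, dist (p k) (p (k+1))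

/-- Mesh of the discrete path `(p 0, …, p n)`. -/
def dMesh (p : ℕ → X) (n : ℕ) : ℝ :=
  (((Finset.range n).sup fun k => nndist (p k) (p (k+1))) : ℝ≥0)

/-- Time-partition points of the discrete path `(p 0, …, p n)`. -/
def tPt (p : ℕ → X) (n : ℕ) (l : ℕ) : ℝ :=
  (∑ k ∈ Finset.range l, dist (p k) (p (k+1))) / dLen p n

/-- The value `h(p 0) + ∑ g(p k) d(p k, p (k+1))` of a discrete path. -/
def dPathVal (g h : X → ℝ) (n : ℕ) (p : ℕ → X) : ℝ :=
  h (p 0) + ∑ k ∈ Finset.range n, g (p k) * dist (p k) (p (k+1))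

/-- Admissible discrete paths from `E` to `y` of mesh at most `δ` (non-repeating). -/
def dAdm (E : Set X) (δ : ℝ) (y : X) (n : ℕ) (p : ℕ → X) : Prop :=
  p 0 ∈ E ∧ p n = y ∧ (∀ k ≤ n, ∀ l ≤ n, p k = p l → k = l) ∧
    ∀ k < n, dist (p k) (p (k+1)) ≤ δ

/-- `f(y) = min(inf over admissible discrete paths of h(p₀) + ∑ g(p_k)d(p_k,p_{k+1}), M)`. -/
def dInfFun (E : Set X) (δ M : ℝ) (g h : X → ℝ) (y : X) : ℝ :=
  sInf (insert M {v : ℝ | ∃ (n : ℕ) (p : ℕ → X), dAdm E δ y n p ∧ v = dPathVal g h n p})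

/-- The function `u(x) = min(inf {∫_γ g ds : γ from X∖V to x}, 1)`. -/
def minCurveFun (V : Set X) (g : X → ℝ≥0∞) (x : X) : ℝ :=
  (min 1 (⨅ (γ : ℝ → X) (_ : IsRectCurve γ ∧ γ 0 ∉ V ∧ γ 1 = x),
    pathIntegral g γ)).toReal

/-- Condenser capacity `Cap_p(E,F)`. -/
def condCap (p : ℝ) (μ : Measure X) (E F : Set X) : ℝ≥0∞ :=
  ⨅ (u : X → ℝ) (g : X → ℝ≥0∞)
    (_ : IsUpperGradient g u ∧ (∀ x ∈ E, u x = 0) ∧ (∀ x ∈ F, u x = 1)),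
    ∫⁻ x, g x ^ p ∂μ

/-- Condenser capacity computed with Lipschitz admissible functions. -/
def condCapLip (p : ℝ) (μ : Measure X) (E F : Set X) : ℝ≥0∞ :=
  ⨅ (u : X → ℝ) (g : X → ℝ≥0∞)
    (_ : (∃ K : ℝ≥0, LipschitzWith K u) ∧ IsUpperGradient g u ∧
      (∀ x ∈ E, u x = 0) ∧ (∀ x ∈ F, u x = 1)),
    ∫⁻ x, g x ^ p ∂μ

/-- Membership in the Newtonian space `N^{1,p}(U)` of an open subset `U`. -/
def MemN1pOn (p : ℝ) (μ : Measure X) (f : X → ℝ) (U : Set X) : Prop :=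
  MemLp f (ENNReal.ofReal p) (μ.restrict U) ∧
    ∃ g : X → ℝ≥0∞, IsUpperGradientOn g f U ∧ ∫⁻ x in U, g x ^ p ∂μ < ⊤

/-- `‖f‖_{N^{1,p}(U)}^p` for an open subset `U`. -/
def N1pEnormOn (p : ℝ) (μ : Measure X) (f : X → ℝ) (U : Set X) : ℝ≥0∞ :=
  (∫⁻ x in U, ENNReal.ofReal |f x| ^ p ∂μ) +
    ⨅ (g : X → ℝ≥0∞) (_ : IsUpperGradientOn g f U), ∫⁻ x in U, g x ^ p ∂μ

end

/-- A metric space is locally complete if every point has a complete neighborhood. -/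
def LocallyCompleteSpace (Y : Type*) [MetricSpace Y] : Prop :=
  ∀ y : Y, ∃ U ∈ nhds y, IsComplete U

/-! Let `γ` be a rectifiable curve meeting `K`, and let `a ≤ b` be the first and last times at
which it lies in `K`. On `[a, b]` the upper gradient inequality for `f` applies, and `f̃ = f` at
`γ a` and `γ b`. On `[0, a)` and `(b, 1]` the curve stays in `X ∖ K`, so the inequality for `f̃`
holds on every closed subinterval, and it passes to `[0, a]` and `[b, 1]` by continuity of
`f̃ ∘ γ`. Splitting the path integral of `γ` at `a` and `b` and using the triangle inequality
glues the three estimates.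

The technical point is that the path integral of the piece of `γ` over `[c, d]` (reparametrized
on `[0, 1]`) is the integral of `g` over `[ℓ c, ℓ d]` in the arc-length parametrization of `γ`,
where `ℓ` is the length function of `γ`. This needs `ℓ` to be continuous, so that every
arc-length value of the piece is attained and its arc-length parametrization is a translate of
that of `γ`. -/

section Variation

variable {α E : Type*} [LinearOrder α]

lemma continuousOn_variationOnFromTo [TopologicalSpace α] [OrderTopology α]
    [PseudoMetricSpace E] {f : α → E} {s : Set α} (hf : LocallyBoundedVariationOn f s)
    (hc : ContinuousOn f s) {a : α} (ha : a ∈ s) :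
    ContinuousOn (variationOnFromTo f s a) s := by
  intro b hb
  have left := variationOnFromTo.tendsto_left ha hb hf ((hc b hb).mono inter_subset_left)
  have right := variationOnFromTo.tendsto_right ha hb hf ((hc b hb).mono inter_subset_left)
  rw [dist_self, sub_zero] at left
  rw [dist_self, add_zero] at right
  refine ((ContinuousWithinAt.union left right).union continuousWithinAt_singleton).mono ?_
  intro x hx
  rcases lt_trichotomy x b with h | rfl | h
  exacts [.inl (.inl ⟨hx, h⟩), .inr rfl, .inl (.inr ⟨hx, h⟩)]

lemma naturalParameterization_variationOnFromTo [EMetricSpace E] {f : α → E} {s : Set α}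
    (hf : LocallyBoundedVariationOn f s) {a b : α} (ha : a ∈ s) (hb : b ∈ s) :
    naturalParameterization f s a (variationOnFromTo f s a b) = f b :=
  edist_eq_zero.1 (edist_naturalParameterization_eq_zero hf ha hb)

lemma variationOnFromTo_Icc_of_subset [PseudoEMetricSpace E] (f : α → E) {s : Set α}
    {a b c : α} (hs : Icc a b ⊆ s) (hc : c ∈ Icc a b) :
    variationOnFromTo f (Icc a b) a c = variationOnFromTo f s a c := by
  have hac : Icc a c ⊆ Icc a b := Icc_subset_Icc_right hc.2
  rw [variationOnFromTo.eq_of_le _ _ hc.1, variationOnFromTo.eq_of_le _ _ hc.1,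
    inter_eq_right.2 hac, inter_eq_right.2 (hac.trans hs)]

end Variation

lemma image_lineMap_Icc_zero_one {c d : ℝ} (hcd : c ≤ d) :
    AffineMap.lineMap c d '' Icc (0 : ℝ) 1 = Icc c d := by
  rw [← segment_eq_image_lineMap, segment_eq_Icc hcd]

lemma setLIntegral_Icc_add_Icc (h : ℝ → ℝ≥0∞) {c d e : ℝ} (hcd : c ≤ d) (hde : d ≤ e) :
    (∫⁻ x in Icc c d, h x) + ∫⁻ x in Icc d e, h x = ∫⁻ x in Icc c e, h x := by
  rw [← setLIntegral_congr (Ioc_ae_eq_Icc (a := d) (b := e)),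
    ← lintegral_union measurableSet_Ioc (disjoint_left.2 fun x hx hx' => hx'.1.not_ge hx.2),
    Icc_union_Ioc_eq_Icc hcd hde]

lemma setLIntegral_Icc_comp_const_add (h : ℝ → ℝ≥0∞) (a L : ℝ) :
    ∫⁻ x in Icc 0 L, h (a + x) = ∫⁻ y in Icc a (a + L), h y := by
  rw [(measurePreserving_add_left volume a).setLIntegral_comp_emb
    (Homeomorph.addLeft a).measurableEmbedding h (Icc 0 L), image_const_add_Icc, add_zero]

lemma exists_first_last_mem_of_isClosed {X : Type*} [TopologicalSpace X] {γ : ℝ → X}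
    {K : Set X} (hγ : ContinuousOn γ (Icc 0 1)) (hK : IsClosed K) {t₀ : ℝ}
    (ht₀ : t₀ ∈ Icc (0 : ℝ) 1) (ht₀K : γ t₀ ∈ K) :
    ∃ a b : ℝ, 0 ≤ a ∧ a ≤ b ∧ b ≤ 1 ∧ γ a ∈ K ∧ γ b ∈ K ∧
      (∀ t ∈ Ioo 0 a, γ t ∈ Kᶜ) ∧ (∀ t ∈ Ioo b 1, γ t ∈ Kᶜ) := by
  set T := Icc 0 1 ∩ γ ⁻¹' K
  have hT : IsCompact T := isCompact_Icc.of_isClosed_subset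
    (hγ.preimage_isClosed_of_isClosed isClosed_Icc hK) inter_subset_left
  have hTne : T.Nonempty := ⟨t₀, ht₀, ht₀K⟩
  obtain ⟨ha01, haK⟩ := hT.sInf_mem hTne
  obtain ⟨hb01, hbK⟩ := hT.sSup_mem hTne
  refine ⟨sInf T, sSup T, ha01.1, csInf_le hT.bddBelow ⟨hb01, hbK⟩, hb01.2, haK, hbK,
    fun t ht htK => ?_, fun t ht htK => ?_⟩
  · exact ht.2.not_ge (csInf_le hT.bddBelow ⟨⟨ht.1.le, ht.2.le.trans ha01.2⟩, htK⟩)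
  · exact ht.1.not_ge (le_csSup hT.bddAbove ⟨⟨hb01.1.trans ht.1.le, ht.2.le⟩, htK⟩)

section Curves

variable {X : Type*}

def subcurve (γ : ℝ → X) (c d : ℝ) : ℝ → X := γ ∘ AffineMap.lineMap c d

lemma subcurve_apply_mem {γ : ℝ → X} {c d : ℝ} (hcd : c ≤ d) {A : Set X}
    (hA : ∀ t ∈ Icc c d, γ t ∈ A) {t : ℝ} (ht : t ∈ Icc (0 : ℝ) 1) : subcurve γ c d t ∈ A :=
  hA _ (image_lineMap_Icc_zero_one hcd ▸ mem_image_of_mem _ ht)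

variable [MetricSpace X]

lemma IsRectCurve.subcurve {γ : ℝ → X} (hγ : IsRectCurve γ) {c d : ℝ}
    (hc : 0 ≤ c) (hcd : c ≤ d) (hd : d ≤ 1) : IsRectCurve (subcurve γ c d) := by
  have hsub : Icc c d ⊆ Icc 0 1 := Icc_subset_Icc hc hd
  refine ⟨hγ.1.comp (AffineMap.lineMap_continuous).continuousOn fun t ht => ?_, ?_⟩
  · exact hsub (image_lineMap_Icc_zero_one hcd ▸ mem_image_of_mem _ ht)
  · rw [curveLen, _root_.subcurve, eVariationOn.comp_eq_of_monotoneOn _ _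
      ((AffineMap.lineMap_mono hcd).monotoneOn _), image_lineMap_Icc_zero_one hcd]
    exact (eVariationOn.mono γ hsub).trans_lt hγ.2

lemma variationOnFromTo_zero_one (γ : ℝ → X) :
    variationOnFromTo γ (Icc 0 1) 0 1 = (curveLen γ).toReal := by
  rw [variationOnFromTo.eq_of_le _ _ zero_le_one, inter_self, curveLen]

lemma variationOnFromTo_subcurve {γ : ℝ → X} (hγ : IsRectCurve γ) {c d : ℝ}
    (hc : 0 ≤ c) (hcd : c ≤ d) (hd : d ≤ 1) {t : ℝ} (ht : t ∈ Icc (0 : ℝ) 1) :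
    variationOnFromTo (subcurve γ c d) (Icc 0 1) 0 t =
      variationOnFromTo γ (Icc 0 1) 0 (AffineMap.lineMap c d t) -
        variationOnFromTo γ (Icc 0 1) 0 c := by
  have hbv : LocallyBoundedVariationOn γ (Icc 0 1) :=
    BoundedVariationOn.locallyBoundedVariationOn hγ.2.ne
  have h0 : (0 : ℝ) ∈ Icc (0 : ℝ) 1 := left_mem_Icc.2 zero_le_one
  have hsub : Icc c d ⊆ Icc 0 1 := Icc_subset_Icc hc hd
  have hψt : AffineMap.lineMap c d t ∈ Icc c d :=
    image_lineMap_Icc_zero_one hcd ▸ mem_image_of_mem _ ht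
  rw [subcurve, variationOnFromTo.comp_eq_of_monotoneOn γ _
      ((AffineMap.lineMap_mono hcd).monotoneOn _) h0 ht,
    image_lineMap_Icc_zero_one hcd, AffineMap.lineMap_apply_zero,
    variationOnFromTo_Icc_of_subset γ hsub hψt,
    variationOnFromTo.sub_right hbv h0 (hsub hψt) (hsub ⟨le_rfl, hcd⟩)]

end Curves

section PathIntegral

variable {X : Type*} [MetricSpace X]

noncomputable def pathIntegralIcc (g : X → ℝ≥0∞) (γ : ℝ → X) (c d : ℝ) : ℝ≥0∞ :=
  ∫⁻ s in Icc (variationOnFromTo γ (Icc 0 1) 0 c) (variationOnFromTo γ (Icc 0 1) 0 d),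
    g (naturalParameterization γ (Icc 0 1) 0 s)

lemma pathIntegral_eq_pathIntegralIcc (g : X → ℝ≥0∞) (γ : ℝ → X) :
    pathIntegral g γ = pathIntegralIcc g γ 0 1 := by
  rw [pathIntegralIcc, variationOnFromTo_zero_one, variationOnFromTo.self, pathIntegral]

variable {γ : ℝ → X} (g : X → ℝ≥0∞)

lemma pathIntegralIcc_mono (hγ : IsRectCurve γ) {c c' d' d : ℝ} (hc : 0 ≤ c) (hcc' : c ≤ c')
    (hc'd' : c' ≤ d') (hd'd : d' ≤ d) (hd : d ≤ 1) :
    pathIntegralIcc g γ c' d' ≤ pathIntegralIcc g γ c d := by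
  have hmono := variationOnFromTo.monotoneOn
    (BoundedVariationOn.locallyBoundedVariationOn hγ.2.ne) (left_mem_Icc.2 zero_le_one)
  have hc' : c' ∈ Icc (0 : ℝ) 1 := ⟨hc.trans hcc', hc'd'.trans (hd'd.trans hd)⟩
  have hd' : d' ∈ Icc (0 : ℝ) 1 := ⟨hc'.1.trans hc'd', hd'd.trans hd⟩
  exact lintegral_mono_set (Icc_subset_Icc (hmono ⟨hc, hcc'.trans hc'.2⟩ hc' hcc')
    (hmono hd' ⟨hd'.1.trans hd'd, hd⟩ hd'd))

lemma pathIntegralIcc_add (hγ : IsRectCurve γ) {c d e : ℝ} (hc : 0 ≤ c) (hcd : c ≤ d)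
    (hde : d ≤ e) (he : e ≤ 1) :
    pathIntegralIcc g γ c d + pathIntegralIcc g γ d e = pathIntegralIcc g γ c e := by
  have hmono := variationOnFromTo.monotoneOn
    (BoundedVariationOn.locallyBoundedVariationOn hγ.2.ne) (left_mem_Icc.2 zero_le_one)
  have hd : d ∈ Icc (0 : ℝ) 1 := ⟨hc.trans hcd, hde.trans he⟩
  exact setLIntegral_Icc_add_Icc _ (hmono ⟨hc, hcd.trans hd.2⟩ hd hcd)
    (hmono hd ⟨hd.1.trans hde, he⟩ hde)

lemma pathIntegral_subcurve (hγ : IsRectCurve γ) {c d : ℝ} (hc : 0 ≤ c) (hcd : c ≤ d)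
    (hd : d ≤ 1) : pathIntegral g (subcurve γ c d) = pathIntegralIcc g γ c d := by
  set φ := variationOnFromTo γ (Icc 0 1) 0
  have h0 : (0 : ℝ) ∈ Icc (0 : ℝ) 1 := left_mem_Icc.2 zero_le_one
  have hσ := hγ.subcurve hc hcd hd
  have hbv := BoundedVariationOn.locallyBoundedVariationOn hγ.2.ne
  have hbvσ := BoundedVariationOn.locallyBoundedVariationOn hσ.2.ne
  have hφσ : ∀ t ∈ Icc (0 : ℝ) 1,
      variationOnFromTo (subcurve γ c d) (Icc 0 1) 0 t = φ (AffineMap.lineMap c d t) - φ c :=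
    fun t ht => variationOnFromTo_subcurve hγ hc hcd hd ht
  have hlen : (curveLen (subcurve γ c d)).toReal = φ d - φ c := by
    rw [← variationOnFromTo_zero_one, hφσ 1 (right_mem_Icc.2 zero_le_one),
      AffineMap.lineMap_apply_one]
  have hN : ∀ x ∈ Icc 0 (φ d - φ c), naturalParameterization (subcurve γ c d) (Icc 0 1) 0 x =
      naturalParameterization γ (Icc 0 1) 0 (φ c + x) := by
    intro x hx
    obtain ⟨t, ht, rfl⟩ : x ∈ variationOnFromTo (subcurve γ c d) (Icc 0 1) 0 '' Icc 0 1 := by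
      refine intermediate_value_Icc zero_le_one
        (continuousOn_variationOnFromTo hbvσ hσ.1 h0) ?_
      rwa [variationOnFromTo.self, variationOnFromTo_zero_one, hlen]
    rw [naturalParameterization_variationOnFromTo hbvσ h0 ht, hφσ t ht, add_sub_cancel,
      naturalParameterization_variationOnFromTo hbv h0
        (Icc_subset_Icc hc hd (image_lineMap_Icc_zero_one hcd ▸ mem_image_of_mem _ ht))]
    rfl
  rw [pathIntegral, hlen, setLIntegral_congr_fun measurableSet_Icc fun x hx => by rw [hN x hx],
    setLIntegral_Icc_comp_const_add (fun y => g (naturalParameterization γ (Icc 0 1) 0 y)),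
    add_sub_cancel, pathIntegralIcc]

end PathIntegral

section UpperGradient

variable {X : Type*} [MetricSpace X] {g : X → ℝ≥0∞} {u : X → ℝ} {A : Set X} {γ : ℝ → X}

lemma IsUpperGradientOn.edist_le_pathIntegralIcc (hu : IsUpperGradientOn g u A)
    (hγ : IsRectCurve γ) {c d : ℝ} (hc : 0 ≤ c) (hcd : c ≤ d) (hd : d ≤ 1)
    (hA : ∀ t ∈ Icc c d, γ t ∈ A) :
    edist (u (γ c)) (u (γ d)) ≤ pathIntegralIcc g γ c d := by
  have h := hu _ (hγ.subcurve hc hcd hd) fun t ht => subcurve_apply_mem hcd hA ht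
  rw [pathIntegral_subcurve g hγ hc hcd hd] at h
  simpa [subcurve, edist_dist, Real.dist_eq, abs_sub_comm] using h

lemma IsUpperGradientOn.edist_le_pathIntegralIcc_of_Ioo (hu : IsUpperGradientOn g u A)
    (huc : Continuous u) (hγ : IsRectCurve γ) {c d : ℝ} (hc : 0 ≤ c) (hcd : c ≤ d) (hd : d ≤ 1)
    (hA : ∀ t ∈ Ioo c d, γ t ∈ A) :
    edist (u (γ c)) (u (γ d)) ≤ pathIntegralIcc g γ c d := by
  rcases hcd.eq_or_lt with rfl | hlt
  · simp
  have hF : ContinuousOn (u ∘ γ) (Icc c d) :=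
    huc.comp_continuousOn (hγ.1.mono (Icc_subset_Icc hc hd))
  have inner : ∀ c' ∈ Ioo c d, ∀ d' ∈ Ioo c' d,
      edist (u (γ c')) (u (γ d')) ≤ pathIntegralIcc g γ c d := fun c' hc' d' hd' =>
    (hu.edist_le_pathIntegralIcc hγ (hc.trans hc'.1.le) hd'.1.le (hd'.2.le.trans hd)
      fun t ht => hA t ⟨hc'.1.trans_le ht.1, ht.2.trans_lt hd'.2⟩).trans
      (pathIntegralIcc_mono g hγ hc hc'.1.le hd'.1.le hd'.2.le hd)
  have right : ∀ c' ∈ Ioo c d, edist (u (γ c')) (u (γ d)) ≤ pathIntegralIcc g γ c d :=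
    fun c' hc' => ContinuousWithinAt.closure_le (f := fun t => edist (u (γ c')) (u (γ t)))
      (g := fun _ => pathIntegralIcc g γ c d)
      (closure_Ioo hc'.2.ne ▸ right_mem_Icc.2 hc'.2.le)
      (tendsto_const_nhds.edist
        ((hF d (right_mem_Icc.2 hlt.le)).mono fun t ht => ⟨hc'.1.le.trans ht.1.le, ht.2.le⟩))
      continuousWithinAt_const (inner c' hc')
  exact ContinuousWithinAt.closure_le (f := fun t => edist (u (γ t)) (u (γ d)))
    (closure_Ioo hlt.ne ▸ left_mem_Icc.2 hlt.le)
    (((hF c (left_mem_Icc.2 hlt.le)).mono Ioo_subset_Icc_self).edist tendsto_const_nhds)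
    continuousWithinAt_const right

theorem IsUpperGradient.of_isUpperGradientOn_compl {f : X → ℝ} {K : Set X}
    (hf : IsUpperGradient g f) (huc : Continuous u) (hK : IsClosed K)
    (hagree : ∀ x ∈ K, u x = f x) (hout : IsUpperGradientOn g u Kᶜ) :
    IsUpperGradient g u := by
  intro γ hγ _
  by_cases hmeet : ∀ t ∈ Icc (0 : ℝ) 1, γ t ∈ Kᶜ
  · exact hout γ hγ hmeet
  obtain ⟨t₀, ht₀, ht₀K⟩ := not_forall₂.1 hmeet
  obtain ⟨a, b, ha, hab, hb, haK, hbK, before, after⟩ :=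
    exists_first_last_mem_of_isClosed hγ.1 hK ht₀ (not_not.1 ht₀K)
  have middle : edist (u (γ a)) (u (γ b)) ≤ pathIntegralIcc g γ a b := by
    rw [hagree _ haK, hagree _ hbK]
    exact hf.edist_le_pathIntegralIcc hγ ha hab hb fun _ _ => mem_univ _
  rw [pathIntegral_eq_pathIntegralIcc, ← pathIntegralIcc_add g hγ le_rfl (ha.trans hab) hb le_rfl,
    ← pathIntegralIcc_add g hγ le_rfl ha hab hb, abs_sub_comm, ← Real.dist_eq, ← edist_dist]
  calc edist (u (γ 0)) (u (γ 1))
      ≤ edist (u (γ 0)) (u (γ a)) + edist (u (γ a)) (u (γ b)) + edist (u (γ b)) (u (γ 1)) :=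
        edist_triangle4 _ _ _ _
    _ ≤ _ := by
      gcongr
      · exact hout.edist_le_pathIntegralIcc_of_Ioo huc hγ le_rfl ha (hab.trans hb) before
      · exact hout.edist_le_pathIntegralIcc_of_Ioo huc hγ (ha.trans hab) hb le_rfl after

end UpperGradient

theorem stmt10_general {X : Type*} [MetricSpace X] [MeasurableSpace X]
    (μ : Measure X) (p : ℝ)
    (f : X → ℝ)
    (g : X → ℝ≥0∞) (hg : IsUpperGradient g f) (hgLp : ∫⁻ x, g x ^ p ∂μ < ⊤)
    (ft : X → ℝ) (hftc : Continuous ft) (hftLp : MemLp ft (ENNReal.ofReal p) μ)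
    (K : Set X) (hK : IsClosed K) (hagree : ∀ x ∈ K, ft x = f x)
    (hout : IsUpperGradientOn g ft Kᶜ) :
    IsUpperGradient g ft ∧ MemN1p p μ ft := by
  have hug := hg.of_isUpperGradientOn_compl hftc hK hagree hout
  exact ⟨hug, hftLp, g, hug, hgLp⟩

/-- gluing of upper gradients along a closed set where a continuous
function agrees with a Newtonian function. -/
theorem stmt10 {X : Type*} [MetricSpace X] [MeasurableSpace X]
    (μ : Measure X) (p : ℝ) (hp : 1 ≤ p)
    (f : X → ℝ) (hf : MemN1p p μ f)
    (g : X → ℝ≥0∞) (hg : IsUpperGradient g f) (hgLp : ∫⁻ x, g x ^ p ∂μ < ⊤)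
    (ft : X → ℝ) (hftc : Continuous ft) (hftLp : MemLp ft (ENNReal.ofReal p) μ)
    (K : Set X) (hK : IsClosed K) (hagree : ∀ x ∈ K, ft x = f x)
    (hout : IsUpperGradientOn g ft Kᶜ) :
    IsUpperGradient g ft ∧ MemN1p p μ ft :=
  stmt10_general μ p f g hg hgLp ft hftc hftLp K hK hagree hout
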